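/- Fix N C : ℕ with 1 ≤ C and let A := Fin N × Bool × Fin C with the mutual-exclusion relation MutEx. The map η ↦ σ(η) is injective, and a set S : Finset A admits a consistent schedule for MutEx with S.card = N * C if and only if there exists a valuation η : Fin N → Bool with S = σ(η); hence σ is a one-to-one correspondence between valuations over N boolean variables and the sets of N * C accepted actions consistent with the mutual-exclusion constraints. -/

import Mathlib

/-!
A schedule for a symmetric relation `r` exists exactly when no two accepted actions are
`r`-related: `r a b` and `r b a` would force `f a < f b < f a`, and otherwise any injection into
`ℕ` will do. For mutual exclusion this says that `S` contains, for each variable, actions of one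
polarity only, i.e. `S ⊆ σ(η)` for some `η`; since `σ(η)` has exactly `N * C` elements, the
cardinality condition forces equality.
-/

/-- A consistent schedule for a finite set `S` of accepted actions with respect to
the precedence relation `r` is a function `f : α → ℕ` injective on `S` with
`f a < f b` whenever `a ∈ S`, `b ∈ S` and `r a b`. -/
def ConsistentSchedule {α : Type*} (r : α → α → Prop) (S : Finset α) (f : α → ℕ) : Prop :=
  Set.InjOn f ↑S ∧ ∀ a ∈ S, ∀ b ∈ S, r a b → f a < f b

/-- The mutual-exclusion relation on actions `A := Fin N × Bool × Fin C`:
`(v, false, i)` and `(v, true, j)` are related (in both orders) for all `v`, `i`, `j`,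
and no other pairs are related. -/
def MutEx (N C : ℕ) (x y : Fin N × Bool × Fin C) : Prop :=
  x.1 = y.1 ∧ x.2.1 = !y.2.1

/-- `σ(η)`: the set of actions `(v, η v, i)` for `v : Fin N` and `i : Fin C`. -/
def sigmaSet (N C : ℕ) (η : Fin N → Bool) : Finset (Fin N × Bool × Fin C) :=
  Finset.univ.filter fun a => a.2.1 = η a.1

section ConsistentSchedule

variable {α : Type*} {r : α → α → Prop} {S : Finset α}

theorem ConsistentSchedule.not_rel {f : α → ℕ} (hf : ConsistentSchedule r S f)
    {a b : α} (ha : a ∈ S) (hb : b ∈ S) (hba : r b a) : ¬ r a b :=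
  fun hab => (hf.2 a ha b hb hab).asymm (hf.2 b hb a ha hba)

theorem exists_consistentSchedule_iff [Countable α] [Std.Symm r] :
    (∃ f, ConsistentSchedule r S f) ↔ ∀ a ∈ S, ∀ b ∈ S, ¬ r a b := by
  refine ⟨fun ⟨f, hf⟩ a ha b hb hab => hf.not_rel ha hb (symm hab) hab, fun hS => ?_⟩
  obtain ⟨f, hf⟩ := Countable.exists_injective_nat α
  exact ⟨f, hf.injOn, fun a ha b hb hab => (hS a ha b hb hab).elim⟩

end ConsistentSchedule

section MutEx

variable {N C : ℕ}

instance : Std.Symm (MutEx N C) where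
  symm _ _ := fun ⟨hv, hb⟩ => ⟨hv.symm, by rw [hb, Bool.not_not]⟩

@[simp]
theorem mem_sigmaSet {η : Fin N → Bool} {a : Fin N × Bool × Fin C} :
    a ∈ sigmaSet N C η ↔ a.2.1 = η a.1 := by
  simp [sigmaSet]

theorem sigmaSet_eq_image (η : Fin N → Bool) :
    sigmaSet N C η = Finset.univ.image fun p : Fin N × Fin C => (p.1, η p.1, p.2) := by
  ext ⟨v, b, i⟩
  simp [eq_comm]

theorem card_sigmaSet (η : Fin N → Bool) : (sigmaSet N C η).card = N * C := by
  rw [sigmaSet_eq_image, Finset.card_image_of_injective]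
  · simp
  · intro p q h
    simp only [Prod.mk.injEq] at h
    exact Prod.ext h.1 h.2.2

theorem sigmaSet_injective (hC : 0 < C) : Function.Injective (sigmaSet N C) := by
  intro η η' h
  funext v
  have hmem : (v, η v, (⟨0, hC⟩ : Fin C)) ∈ sigmaSet N C η := mem_sigmaSet.2 rfl
  rw [h] at hmem
  exact mem_sigmaSet.1 hmem

theorem not_mutEx_of_mem_sigmaSet {η : Fin N → Bool} {a b : Fin N × Bool × Fin C}
    (ha : a ∈ sigmaSet N C η) (hb : b ∈ sigmaSet N C η) : ¬ MutEx N C a b := by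
  rintro ⟨hv, hab⟩
  rw [mem_sigmaSet.1 ha, mem_sigmaSet.1 hb, hv] at hab
  exact (Bool.eq_not_self _).1 hab

theorem exists_subset_sigmaSet {S : Finset (Fin N × Bool × Fin C)}
    (hS : ∀ a ∈ S, ∀ b ∈ S, ¬ MutEx N C a b) : ∃ η, S ⊆ sigmaSet N C η := by
  classical
  refine ⟨fun v => decide (∃ i, (v, true, i) ∈ S), ?_⟩
  rintro ⟨v, b, i⟩ ha
  cases b
  · simp only [mem_sigmaSet, Bool.false_eq, decide_eq_false_iff_not, not_exists]
    exact fun j hj => hS _ ha _ hj ⟨rfl, rfl⟩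
  · simpa using ⟨i, ha⟩

end MutEx

/-- `σ` is a one-to-one correspondence between valuations over `N` boolean variables
and the sets of `N * C` accepted actions consistent with the mutual-exclusion
constraints. -/
theorem sigmaSet_bijection (N C : ℕ) (hC : 1 ≤ C) :
    Function.Injective (sigmaSet N C) ∧
      ∀ S : Finset (Fin N × Bool × Fin C),
        ((∃ f : Fin N × Bool × Fin C → ℕ, ConsistentSchedule (MutEx N C) S f) ∧
            S.card = N * C) ↔
          ∃ η : Fin N → Bool, S = sigmaSet N C η := by
  refine ⟨sigmaSet_injective hC, fun S => ?_⟩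
  rw [exists_consistentSchedule_iff]
  constructor
  · rintro ⟨hS, hcard⟩
    obtain ⟨η, hsub⟩ := exists_subset_sigmaSet hS
    exact ⟨η, Finset.eq_of_subset_of_card_le hsub (by rw [card_sigmaSet, hcard])⟩
  · rintro ⟨η, rfl⟩
    exact ⟨fun a ha b hb => not_mutEx_of_mem_sigmaSet ha hb, card_sigmaSet η⟩
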